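/- For every m ≥ 0 the derivative of the monic generalized Hermite polynomial of odd degree satisfies the two polynomial identities x·(K_{2m+1}^{(γ)})'(x) = (2m+1)·x·K_{2m}^{(γ)}(x) + mγ·K_{2m−1}^{(γ)}(x) and x·(K_{2m+1}^{(γ)})'(x) = (2m+1+γ)·x·K_{2m}^{(γ)}(x) − γ·K_{2m+1}^{(γ)}(x). -/
import Mathlib


open Polynomial

/-- The monic generalized Hermite polynomials `K_n^{(γ)}`, defined by `K 0 = 1`, `K 1 = X`
and `K_{n+1}(x) = x · K_n(x) - â_n · K_{n-1}(x)` where `â_n = n/2` for even `n` and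
`â_n = (n+γ)/2` for odd `n`; they are orthogonal with respect to `|x|^γ exp(-x²)` on `ℝ`. -/
noncomputable def genHermite (γ : ℝ) : ℕ → Polynomial ℝ
  | 0 => 1
  | 1 => Polynomial.X
  | n + 2 =>
      Polynomial.X * genHermite γ (n + 1) -
        Polynomial.C (if Even (n + 1) then ((n : ℝ) + 1) / 2 else ((n : ℝ) + 1 + γ) / 2) *
          genHermite γ n

lemma rec_even (γ : ℝ) (m : ℕ) :
    genHermite γ (2*m+2) = X * genHermite γ (2*m+1) -
      C ((2*(m:ℝ)+1+γ)/2) * genHermite γ (2*m) := by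
  rw [genHermite]
  simp [Nat.even_add_one, parity_simps]

lemma rec_odd (γ : ℝ) (m : ℕ) :
    genHermite γ (2*m+1) = X * genHermite γ (2*m) -
      C (m:ℝ) * genHermite γ (2*m-1) := by
  cases m with
  | zero => simp [genHermite]
  | succ k =>
    rw [show 2*(k+1)+1 = (2*k+1)+2 from by ring, show 2*(k+1)-1 = 2*k+1 from by omega,
      genHermite, if_pos ⟨k+1, by ring⟩,
      show (((2*k+1:ℕ):ℝ)+1)/2 = ((k+1:ℕ):ℝ) from by push_cast; ring,
      show 2*k+1+1 = 2*(k+1) from by ring]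

lemma joint (γ : ℝ) (m : ℕ) :
    derivative (genHermite γ (2*m)) = C (2*(m:ℝ)) * genHermite γ (2*m-1) ∧
    X * derivative (genHermite γ (2*m+1)) =
      C (2*(m:ℝ)+1) * X * genHermite γ (2*m) + C ((m:ℝ)*γ) * genHermite γ (2*m-1) := by
  induction m with
  | zero => constructor <;> simp [genHermite]
  | succ m ih =>
    obtain ⟨ihE, ihO⟩ := ih
    have hd1 : derivative (genHermite γ (2*m+2)) =
        genHermite γ (2*m+1) + X * derivative (genHermite γ (2*m+1)) -
          C ((2*(m:ℝ)+1+γ)/2) * derivative (genHermite γ (2*m)) := by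
      rw [rec_even]
      simp [derivative_mul]
      try ring
    have key : X * derivative (genHermite γ (2*m+2)) =
        X * (C (2*(m:ℝ)+2) * genHermite γ (2*m+1)) := by
      apply Polynomial.funext
      intro x
      have h1 := congrArg (eval x) hd1
      have h2 := congrArg (eval x) ihE
      have h3 := congrArg (eval x) ihO
      have h4 := congrArg (eval x) (rec_odd γ m)
      simp only [eval_mul, eval_add, eval_sub, eval_C, eval_X] at h1 h2 h3 h4 ⊢
      linear_combination x*h1 + x*h3 - ((2*(m:ℝ)+1+γ)/2)*x*h2 - (2*(m:ℝ)+1)*x*h4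
    have hE2 : derivative (genHermite γ (2*m+2)) = C (2*(m:ℝ)+2) * genHermite γ (2*m+1) :=
      mul_left_cancel₀ Polynomial.X_ne_zero key
    constructor
    · show derivative (genHermite γ (2*m+2)) = C (2*((m+1:ℕ):ℝ)) * genHermite γ (2*m+1)
      rw [hE2]
      push_cast
      ring
    · have hd2 : derivative (genHermite γ (2*m+2+1)) =
          genHermite γ (2*m+2) + X * derivative (genHermite γ (2*m+2)) -
            C ((m:ℝ)+1) * derivative (genHermite γ (2*m+1)) := by
        have h := rec_odd γ (m+1)
        rw [show 2*(m+1)-1 = 2*m+1 from by omega, show 2*(m+1)+1 = 2*m+2+1 from by ring,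
          show 2*(m+1) = 2*m+2 from by ring] at h
        rw [h]
        push_cast
        simp [derivative_mul]
        try ring
      show X * derivative (genHermite γ (2*m+2+1)) =
          C (2*((m+1:ℕ):ℝ)+1) * X * genHermite γ (2*m+2) +
            C (((m+1:ℕ):ℝ)*γ) * genHermite γ (2*m+1)
      apply Polynomial.funext
      intro x
      have h1 := congrArg (eval x) hd2
      have h2 := congrArg (eval x) hE2
      have h3 := congrArg (eval x) ihO
      have h4 := congrArg (eval x) (rec_odd γ m)
      have h5 := congrArg (eval x) (rec_even γ m)
      simp only [eval_mul, eval_add, eval_sub, eval_C, eval_X] at h1 h2 h3 h4 h5 ⊢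
      push_cast
      linear_combination x*h1 + x*x*h2 - ((m:ℝ)+1)*h3 - (2*(m:ℝ)+2)*x*h5 - ((m:ℝ)+1)*γ*h4

/-- **Derivative identities for odd-degree generalized Hermite polynomials.**
For every `m ≥ 0` (where for `m = 0` the term `mγ · K_{2m-1}^{(γ)}` vanishes since its
coefficient is `0`):
`x · (K_{2m+1}^{(γ)})'(x) = (2m+1) · x · K_{2m}^{(γ)}(x) + mγ · K_{2m-1}^{(γ)}(x)` and
`x · (K_{2m+1}^{(γ)})'(x) = (2m+1+γ) · x · K_{2m}^{(γ)}(x) - γ · K_{2m+1}^{(γ)}(x)`. -/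
theorem genHermite_odd_derivative (γ : ℝ) (hγ : -1 < γ) (m : ℕ) :
    Polynomial.X * Polynomial.derivative (genHermite γ (2 * m + 1)) =
      Polynomial.C ((2 * (m : ℝ) + 1)) * Polynomial.X * genHermite γ (2 * m) +
        Polynomial.C ((m : ℝ) * γ) * genHermite γ (2 * m - 1) ∧
    Polynomial.X * Polynomial.derivative (genHermite γ (2 * m + 1)) =
      Polynomial.C ((2 * (m : ℝ) + 1 + γ)) * Polynomial.X * genHermite γ (2 * m) -
        Polynomial.C γ * genHermite γ (2 * m + 1) := by
  refine ⟨(joint γ m).2, ?_⟩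
  apply Polynomial.funext
  intro x
  have h1 := congrArg (eval x) (joint γ m).2
  have h2 := congrArg (eval x) (rec_odd γ m)
  simp only [eval_mul, eval_add, eval_sub, eval_C, eval_X] at h1 h2 ⊢
  linear_combination h1 + γ*h2
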